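/- arXiv:2602.11822 — 2 statements merged into one kernel-verified Lean document; each statement's English description precedes it below -/
import Mathlib

section
/- (Lemma 3: positive definiteness of the undirected grounded Laplacian.) Let A_{ij} be a signed matrix-weight assignment on N vertices with A_{ij} = A_{ji} for all i ≠ j, and suppose Assumption 2 holds with partition V1 ∪ V2. Let δ_1,…,δ_N ≥ 0 and let B_1,…,B_N ∈ ℝ^{d×d} be symmetric, each positive semidefinite or negative semidefinite, such that |B_i| is positive definite and δ_i > 0 for every i ∈ V1. Then the grounded Laplacian L_B = L + blockdiag(δ_1|B_1|,…,δ_N|B_N|) is symmetric positive definite; in particular, every eigenvalue of L_B is a positive real number. -/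
open Matrix Filter
open scoped Classical

/-- `|Q|` for a real symmetric matrix that is positive semidefinite or negative
semidefinite: it equals `Q` in the first case and `-Q` in the second. -/
noncomputable def absM {d : ℕ} (Q : Matrix (Fin d) (Fin d) ℝ) : Matrix (Fin d) (Fin d) ℝ :=
  if Q.PosSemidef then Q else -Q

/-- A signed matrix-weight assignment: for `i ≠ j`, each weight `A i j` is symmetric
and either positive semidefinite or negative semidefinite. -/
def SignedWeights {N d : ℕ} (A : Fin N → Fin N → Matrix (Fin d) (Fin d) ℝ) : Prop :=
  ∀ i j : Fin N, i ≠ j → (A i j).IsSymm ∧ ((A i j).PosSemidef ∨ (-(A i j)).PosSemidef)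

/-- The signed matrix-weighted Laplacian: `(i,j)` block `−A_{ij}` for `j ≠ i`, and
`(i,i)` block `Σ_{k≠i}|A_{ik}|`. -/
noncomputable def Lap {N d : ℕ} (A : Fin N → Fin N → Matrix (Fin d) (Fin d) ℝ) :
    Matrix (Fin N × Fin d) (Fin N × Fin d) ℝ :=
  fun p q =>
    if p.1 = q.1 then (∑ k ∈ Finset.univ.erase p.1, absM (A p.1 k)) p.2 q.2
    else (-(A p.1 q.1)) p.2 q.2

/-- The block-diagonal `Nd × Nd` matrix with `d × d` diagonal blocks `D 1, …, D N`. -/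
def blockDiag' {N d : ℕ} (D : Fin N → Matrix (Fin d) (Fin d) ℝ) :
    Matrix (Fin N × Fin d) (Fin N × Fin d) ℝ :=
  fun p q => if p.1 = q.1 then D p.1 p.2 q.2 else 0

/-- Matrix-weighted in-degree `Σ_{k∈N_i}|A_{ik}|` of vertex `i`
(weights `A i k = 0` contribute nothing). -/
noncomputable def inDeg {N d : ℕ} (A : Fin N → Fin N → Matrix (Fin d) (Fin d) ℝ)
    (i : Fin N) : Matrix (Fin d) (Fin d) ℝ :=
  ∑ k ∈ Finset.univ.erase i, absM (A i k)

/-- Matrix-weighted out-degree `Σ_{k∈N'_i}|A_{ki}|` of vertex `i`. -/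
noncomputable def outDeg {N d : ℕ} (A : Fin N → Fin N → Matrix (Fin d) (Fin d) ℝ)
    (i : Fin N) : Matrix (Fin d) (Fin d) ℝ :=
  ∑ k ∈ Finset.univ.erase i, absM (A k i)

/-- A positive–negative path from `i` to `j`: a sequence `i = p 0, …, p m = j` with
`m ≥ 1` in which every traversed weight `A_{p(s+1), p(s)}` is positive or negative
definite. -/
def PNPath {N d : ℕ} (A : Fin N → Fin N → Matrix (Fin d) (Fin d) ℝ) (i j : Fin N) : Prop :=
  ∃ m : ℕ, 0 < m ∧ ∃ p : Fin (m + 1) → Fin N, p 0 = i ∧ p (Fin.last m) = j ∧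
    ∀ s : Fin m, (A (p s.succ) (p s.castSucc)).PosDef ∨ (-(A (p s.succ) (p s.castSucc))).PosDef

/-- Vertex `j` is in-degree-dominated. -/
def InDegDom {N d : ℕ} (A : Fin N → Fin N → Matrix (Fin d) (Fin d) ℝ) (j : Fin N) : Prop :=
  (inDeg A j - outDeg A j).PosSemidef

/-- Assumption 1: `{1,…,N} = V1 ∪ V2` disjointly, every `j ∈ V2` is reached from some
`i ∈ V1` by a positive–negative path, and every `j ∈ V2` is in-degree-dominated. -/
def Assumption1 {N d : ℕ} (A : Fin N → Fin N → Matrix (Fin d) (Fin d) ℝ)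
    (V1 V2 : Finset (Fin N)) : Prop :=
  V1 ∪ V2 = Finset.univ ∧ V1 ∩ V2 = ∅ ∧
    (∀ j ∈ V2, ∃ i ∈ V1, PNPath A i j) ∧ (∀ j ∈ V2, InDegDom A j)

/-- `Ω_i`: the set of (other) vertices `j` with `A_{ij}` negative semidefinite and nonzero. -/
noncomputable def OmegaSet {N d : ℕ} (A : Fin N → Fin N → Matrix (Fin d) (Fin d) ℝ)
    (i : Fin N) : Finset (Fin N) :=
  (Finset.univ.erase i).filter fun j => (-(A i j)).PosSemidef ∧ A i j ≠ 0

/-- Assumption 2: `{1,…,N} = V1 ∪ V2` disjointly and every `j ∈ V2` is reached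
from some `i ∈ V1` by a positive–negative path. -/
def Assumption2 {N d : ℕ} (A : Fin N → Fin N → Matrix (Fin d) (Fin d) ℝ)
    (V1 V2 : Finset (Fin N)) : Prop :=
  V1 ∪ V2 = Finset.univ ∧ V1 ∩ V2 = ∅ ∧ ∀ j ∈ V2, ∃ i ∈ V1, PNPath A i j

/-!
Each vertex pair `i ≠ j` contributes `(x_i ∓ x_j)ᵀ |A_ij| (x_i ∓ x_j) ≥ 0` to twice the
quadratic form of `L`, and vertex `i` contributes `δ_i x_iᵀ |B_i| x_i ≥ 0` to that of the
grounding term, so `L_B` is positive semidefinite. If `xᵀ L_B x = 0`, every contribution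
vanishes: `x_i = 0` on `V1` because `δ_i |B_i| > 0` there, and across an edge with definite
weight `|A_ij| > 0` the pair term forces `x_j = 0` once `x_i = 0`. Positive–negative paths from
`V1` therefore give `x = 0`. The eigenvalues of the real symmetric positive definite `L_B` are
positive reals.
-/

open Finset Function

lemma dotProduct_mulVec_prod {ι κ R : Type*} [Fintype ι] [Fintype κ] [CommSemiring R]
    (M : Matrix (ι × κ) (ι × κ) R) (x y : ι × κ → R) :
    x ⬝ᵥ M *ᵥ y =
      ∑ i, ∑ j, curry x i ⬝ᵥ M.submatrix (Prod.mk i) (Prod.mk j) *ᵥ curry y j := by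
  simp only [dotProduct, mulVec, Fintype.sum_prod_type, mul_sum, submatrix_apply,
    curry_apply]
  exact sum_congr rfl fun i _ => sum_comm

lemma Matrix.PosDef.eq_zero_of_dotProduct_mulVec_self_eq_zero {n : Type*} [Fintype n]
    {M : Matrix n n ℝ} (hM : M.PosDef) {x : n → ℝ} (hx : x ⬝ᵥ M *ᵥ x = 0) : x = 0 := by
  by_contra hx0
  simpa [hx] using hM.dotProduct_mulVec_pos hx0

lemma Matrix.PosDef.im_eq_zero_and_re_pos_of_isRoot_charpoly {n : Type*} [Fintype n]
    [DecidableEq n] {M : Matrix n n ℝ} (hM : M.PosDef) {μ : ℂ}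
    (h : (M.map Complex.ofReal).charpoly.IsRoot μ) : μ.im = 0 ∧ 0 < μ.re := by
  change (M.map Complex.ofRealHom).charpoly.IsRoot μ at h
  rw [charpoly_map, hM.isHermitian.charpoly_eq, Polynomial.map_prod, Polynomial.IsRoot.def,
    Polynomial.eval_prod, prod_eq_zero_iff] at h
  obtain ⟨i, -, hi⟩ := h
  simp only [Polynomial.map_sub, Polynomial.map_X, Polynomial.map_C, Polynomial.eval_sub,
    Polynomial.eval_X, Polynomial.eval_C, sub_eq_zero] at hi
  subst hi
  simpa using hM.eigenvalues_pos i

section SignedLaplacian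

variable {N d : ℕ}

lemma absM_posSemidef {Q : Matrix (Fin d) (Fin d) ℝ} (hQ : Q.PosSemidef ∨ (-Q).PosSemidef) :
    (absM Q).PosSemidef := by
  unfold absM
  split_ifs with h
  exacts [h, hQ.resolve_left h]

lemma absM_posDef {Q : Matrix (Fin d) (Fin d) ℝ} (hQ : Q.PosDef ∨ (-Q).PosDef) :
    (absM Q).PosDef := by
  unfold absM
  split_ifs with h
  · refine hQ.elim id fun hneg => ?_
    refine .of_dotProduct_mulVec_pos h.isHermitian fun x hx => ?_
    have := hneg.dotProduct_mulVec_pos hx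
    have := h.dotProduct_mulVec_nonneg x
    simp only [star_trivial, neg_mulVec, dotProduct_neg, neg_pos] at *
    linarith
  · exact hQ.resolve_left fun hpos => h hpos.posSemidef

lemma isSymm_absM {Q : Matrix (Fin d) (Fin d) ℝ} (hQ : Q.IsSymm) : (absM Q).IsSymm := by
  unfold absM
  split_ifs
  exacts [hQ, hQ.neg]

section Laplacian

variable {A : Fin N → Fin N → Matrix (Fin d) (Fin d) ℝ}

lemma Lap_submatrix_self (i : Fin N) :
    (Lap A).submatrix (Prod.mk i) (Prod.mk i) = ∑ k ∈ univ.erase i, absM (A i k) := by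
  ext a b
  simp [Lap]

lemma Lap_submatrix_of_ne {i j : Fin N} (h : i ≠ j) :
    (Lap A).submatrix (Prod.mk i) (Prod.mk j) = -A i j := by
  ext a b
  simp [Lap, h]

noncomputable def lapTerm (Q : Matrix (Fin d) (Fin d) ℝ) (u w : Fin d → ℝ) : ℝ :=
  u ⬝ᵥ absM Q *ᵥ u - u ⬝ᵥ Q *ᵥ w

lemma dotProduct_mulVec_Lap (x : Fin N × Fin d → ℝ) :
    x ⬝ᵥ Lap A *ᵥ x = ∑ i, ∑ j ∈ univ.erase i, lapTerm (A i j) (curry x i) (curry x j) := by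
  rw [dotProduct_mulVec_prod]
  refine sum_congr rfl fun i _ => ?_
  rw [← add_sum_erase _ _ (mem_univ i), Lap_submatrix_self, sum_mulVec, dotProduct_sum,
    ← sum_add_distrib]
  refine sum_congr rfl fun j hj => ?_
  rw [Lap_submatrix_of_ne (ne_of_mem_erase hj).symm, neg_mulVec, dotProduct_neg, lapTerm,
    sub_eq_add_neg]

lemma lapTerm_add_lapTerm_nonneg {Q : Matrix (Fin d) (Fin d) ℝ}
    (hQ : Q.PosSemidef ∨ (-Q).PosSemidef) (u w : Fin d → ℝ) :
    0 ≤ lapTerm Q u w + lapTerm Q w u := by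
  -- the sum is `(u - w)ᵀ Q (u - w)` if `Q ≥ 0` and `(u + w)ᵀ (-Q) (u + w)` if `Q ≤ 0`
  unfold lapTerm absM
  split_ifs with h
  · have := h.dotProduct_mulVec_nonneg (u - w)
    simp only [star_trivial, mulVec_sub, dotProduct_sub, sub_dotProduct] at this
    linarith
  · have := (hQ.resolve_left h).dotProduct_mulVec_nonneg (u + w)
    simp only [star_trivial, neg_mulVec, mulVec_add, dotProduct_neg, dotProduct_add,
      add_dotProduct] at this ⊢
    linarith

lemma lapTerm_zero_add_lapTerm_zero (Q : Matrix (Fin d) (Fin d) ℝ) (w : Fin d → ℝ) :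
    lapTerm Q 0 w + lapTerm Q w 0 = w ⬝ᵥ absM Q *ᵥ w := by
  simp [lapTerm]

lemma two_mul_dotProduct_mulVec_Lap (hund : ∀ i j : Fin N, i ≠ j → A i j = A j i)
    (x : Fin N × Fin d → ℝ) :
    2 * (x ⬝ᵥ Lap A *ᵥ x) = ∑ i, ∑ j ∈ univ.erase i,
      (lapTerm (A i j) (curry x i) (curry x j) + lapTerm (A i j) (curry x j) (curry x i)) := by
  rw [dotProduct_mulVec_Lap, two_mul]
  nth_rw 2 [sum_comm' (t' := univ) (s' := fun j => univ.erase j) (by simp [and_comm, eq_comm])]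
  rw [← sum_add_distrib]
  refine sum_congr rfl fun i _ => ?_
  rw [← sum_add_distrib]
  refine sum_congr rfl fun j hj => ?_
  rw [hund j i (ne_of_mem_erase hj)]

lemma Lap_isSymm (hA : SignedWeights A) (hund : ∀ i j : Fin N, i ≠ j → A i j = A j i) :
    (Lap A).IsSymm := by
  ext ⟨k, a⟩ ⟨l, b⟩
  by_cases hkl : k = l
  · subst hkl
    simp only [transpose_apply, Lap, if_true, Matrix.sum_apply]
    exact sum_congr rfl fun j hj =>
      (isSymm_absM (hA k j (ne_of_mem_erase hj).symm).1).apply a b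
  · simp only [transpose_apply, Lap, if_neg hkl, if_neg (Ne.symm hkl), Matrix.neg_apply,
      hund l k (Ne.symm hkl)]
    exact congrArg Neg.neg ((hA k l hkl).1.apply a b)

lemma Lap_posSemidef (hA : SignedWeights A) (hund : ∀ i j : Fin N, i ≠ j → A i j = A j i) :
    (Lap A).PosSemidef := by
  refine .of_dotProduct_mulVec_nonneg (isHermitian_iff_isSymm.mpr (Lap_isSymm hA hund))
    fun x => ?_
  have htwice : 0 ≤ 2 * (x ⬝ᵥ Lap A *ᵥ x) := two_mul_dotProduct_mulVec_Lap hund x ▸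
    sum_nonneg fun i _ => sum_nonneg fun j hj =>
      lapTerm_add_lapTerm_nonneg (hA i j (ne_of_mem_erase hj).symm).2 _ _
  rw [star_trivial]
  linarith

lemma curry_eq_zero_of_dotProduct_mulVec_Lap_eq_zero (hA : SignedWeights A)
    (hund : ∀ i j : Fin N, i ≠ j → A i j = A j i) {x : Fin N × Fin d → ℝ}
    (hx : x ⬝ᵥ Lap A *ᵥ x = 0) {i j : Fin N} (hij : (A j i).PosDef ∨ (-(A j i)).PosDef)
    (hi : curry x i = 0) : curry x j = 0 := by
  rcases eq_or_ne j i with rfl | hji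
  · exact hi
  have hsum := two_mul_dotProduct_mulVec_Lap hund x
  rw [hx, mul_zero, eq_comm, sum_eq_zero_iff_of_nonneg fun i _ => sum_nonneg fun j hj =>
    lapTerm_add_lapTerm_nonneg (hA i j (ne_of_mem_erase hj).symm).2 _ _] at hsum
  have hterm := (sum_eq_zero_iff_of_nonneg fun j hj =>
    lapTerm_add_lapTerm_nonneg (hA i j (ne_of_mem_erase hj).symm).2 _ _).mp
      (hsum i (mem_univ i)) j (mem_erase.mpr ⟨hji, mem_univ j⟩)
  rw [hi, lapTerm_zero_add_lapTerm_zero, hund i j hji.symm] at hterm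
  exact (absM_posDef hij).eq_zero_of_dotProduct_mulVec_self_eq_zero hterm

end Laplacian

section BlockDiagonal

variable {D : Fin N → Matrix (Fin d) (Fin d) ℝ}

lemma dotProduct_mulVec_blockDiag' (x : Fin N × Fin d → ℝ) :
    x ⬝ᵥ blockDiag' D *ᵥ x = ∑ i, curry x i ⬝ᵥ D i *ᵥ curry x i := by
  rw [dotProduct_mulVec_prod]
  refine sum_congr rfl fun i _ => (sum_eq_single i (fun j _ hji => ?_) (by simp)).trans ?_
  · have : (blockDiag' D).submatrix (Prod.mk i) (Prod.mk j) = 0 := by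
      ext a b
      simp [_root_.blockDiag', hji.symm]
    simp [this]
  · congr 2
    ext a b
    simp [_root_.blockDiag']

lemma blockDiag'_posSemidef (hD : ∀ i, (D i).PosSemidef) : (blockDiag' D).PosSemidef := by
  refine .of_dotProduct_mulVec_nonneg ?_ fun x => ?_
  · rw [isHermitian_iff_isSymm]
    ext ⟨k, a⟩ ⟨l, b⟩
    by_cases hkl : k = l
    · subst hkl
      simpa [_root_.blockDiag'] using ((hD k).isHermitian.apply a b)
    · simp [_root_.blockDiag', hkl, Ne.symm hkl]
  · rw [star_trivial, dotProduct_mulVec_blockDiag']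
    exact sum_nonneg fun i _ => by simpa using (hD i).dotProduct_mulVec_nonneg (curry x i)

lemma curry_eq_zero_of_dotProduct_mulVec_blockDiag'_eq_zero (hD : ∀ i, (D i).PosSemidef)
    {x : Fin N × Fin d → ℝ} (hx : x ⬝ᵥ blockDiag' D *ᵥ x = 0) {i : Fin N}
    (hi : (D i).PosDef) : curry x i = 0 := by
  rw [dotProduct_mulVec_blockDiag', sum_eq_zero_iff_of_nonneg fun i _ => by
    simpa using (hD i).dotProduct_mulVec_nonneg (curry x i)] at hx
  exact hi.eq_zero_of_dotProduct_mulVec_self_eq_zero (hx i (mem_univ i))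

end BlockDiagonal

lemma PNPath.induction {A : Fin N → Fin N → Matrix (Fin d) (Fin d) ℝ} {P : Fin N → Prop}
    (hstep : ∀ i j, (A j i).PosDef ∨ (-(A j i)).PosDef → P i → P j) {i j : Fin N}
    (hij : PNPath A i j) (hi : P i) : P j := by
  obtain ⟨m, -, p, rfl, rfl, hp⟩ := hij
  exact Fin.induction hi (fun s hs => hstep _ _ (hp s) hs) (Fin.last m)

end SignedLaplacian

theorem stmt8_general (N d : ℕ)
    (A : Fin N → Fin N → Matrix (Fin d) (Fin d) ℝ) (hA : SignedWeights A)
    (hund : ∀ i j : Fin N, i ≠ j → A i j = A j i)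
    (V1 V2 : Finset (Fin N)) (hAss : Assumption2 A V1 V2)
    (δ : Fin N → ℝ) (hδ0 : ∀ i, 0 ≤ δ i)
    (B : Fin N → Matrix (Fin d) (Fin d) ℝ)
    (hBsd : ∀ i, (B i).PosSemidef ∨ (-(B i)).PosSemidef)
    (hV1 : ∀ i ∈ V1, (absM (B i)).PosDef ∧ 0 < δ i) :
    (Lap A + blockDiag' fun i => δ i • absM (B i)).PosDef ∧
    ∀ μ : ℂ,
      (((Lap A + blockDiag' fun i => δ i • absM (B i)).map
        (Complex.ofReal)).charpoly).IsRoot μ → μ.im = 0 ∧ 0 < μ.re := by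
  have hD : ∀ i, (δ i • absM (B i)).PosSemidef := fun i => (absM_posSemidef (hBsd i)).smul (hδ0 i)
  have hL := Lap_posSemidef hA hund
  have hPD : (Lap A + blockDiag' fun i => δ i • absM (B i)).PosDef := by
    refine .of_dotProduct_mulVec_pos (hL.add (blockDiag'_posSemidef hD)).isHermitian
      fun x hx => ?_
    have hLx := hL.dotProduct_mulVec_nonneg x
    have hDx := (blockDiag'_posSemidef hD).dotProduct_mulVec_nonneg x
    rw [star_trivial] at hLx hDx ⊢
    rw [add_mulVec, dotProduct_add]
    refine (add_nonneg hLx hDx).lt_of_ne fun h0 => hx ?_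
    have hV1x : ∀ i ∈ V1, curry x i = 0 := fun i hi =>
      curry_eq_zero_of_dotProduct_mulVec_blockDiag'_eq_zero hD (by linarith)
        ((hV1 i hi).1.smul (hV1 i hi).2)
    have hx0 : ∀ j, curry x j = 0 := by
      intro j
      rcases mem_union.mp (hAss.1 ▸ mem_univ j : j ∈ V1 ∪ V2) with hj | hj
      · exact hV1x j hj
      · obtain ⟨i, hi, hij⟩ := hAss.2.2 j hj
        exact hij.induction (fun k l hkl =>
          curry_eq_zero_of_dotProduct_mulVec_Lap_eq_zero hA hund (by linarith) hkl) (hV1x i hi)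
    ext ⟨j, a⟩
    exact congrFun (hx0 j) a
  exact ⟨hPD, fun μ => hPD.im_eq_zero_and_re_pos_of_isRoot_charpoly⟩

/-- Lemma 3: positive definiteness of the undirected grounded
Laplacian; in particular every eigenvalue of `L_B` is a positive real number. -/
theorem stmt8 (N d : ℕ) (hN : 1 ≤ N) (hd : 1 ≤ d)
    (A : Fin N → Fin N → Matrix (Fin d) (Fin d) ℝ) (hA : SignedWeights A)
    (hund : ∀ i j : Fin N, i ≠ j → A i j = A j i)
    (V1 V2 : Finset (Fin N)) (hAss : Assumption2 A V1 V2)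
    (δ : Fin N → ℝ) (hδ0 : ∀ i, 0 ≤ δ i)
    (B : Fin N → Matrix (Fin d) (Fin d) ℝ)
    (hBsymm : ∀ i, (B i).IsSymm)
    (hBsd : ∀ i, (B i).PosSemidef ∨ (-(B i)).PosSemidef)
    (hV1 : ∀ i ∈ V1, (absM (B i)).PosDef ∧ 0 < δ i) :
    (Lap A + blockDiag' fun i => δ i • absM (B i)).PosDef ∧
    ∀ μ : ℂ,
      (((Lap A + blockDiag' fun i => δ i • absM (B i)).map
        (Complex.ofReal)).charpoly).IsRoot μ → μ.im = 0 ∧ 0 < μ.re :=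
  stmt8_general N d A hA hund V1 V2 hAss δ hδ0 B hBsd hV1
end

section
/- (Corollary 1: non-trivial consensus on undirected signed matrix-weighted networks.) Let A_{ij} be a signed matrix-weight assignment on N vertices with A_{ij} = A_{ji} for all i ≠ j, satisfying Assumption 2 with partition V1 ∪ V2, and suppose Σ_{j∈Ω_i}|A_{ij}| is positive definite for every i ∈ V1, where Ω_i = {j : A_{ij} is negative semidefinite and nonzero}. Let θ ∈ ℝ^d with θ ≠ 0 and let δ > 0 be arbitrary. Apply the design: δ_i = δ for i ∈ U = {i : Ω_i ≠ ∅} and δ_i = 0 otherwise; B_i = Σ_{j∈Ω_i}|A_{ij}| for i ∈ U and B_i = 0 otherwise; x_0 = (1 + 2/δ)θ. Let L_B = L + blockdiag(δ_1 B_1,…,δ_N B_N) and let b ∈ ℝ^{Nd} be the vector whose i-th d-dimensional block is δ_i B_i x_0. Then every differentiable function x : [0,∞) → ℝ^{Nd} satisfying x'(t) = −L_B x(t) + b for all t ≥ 0 converges: x(t) → 1_N ⊗ θ as t → ∞. -/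
open Matrix Filter
open scoped Classical

/-!
With the prescribed design, `B i = 0` whenever `δi i = 0`, so `LB = L + blockdiag(δ B_i)`.
For undirected signed weights, `2 xᵀ L x = Σ_{i ≠ j} (x_i - s_ij x_j)ᵀ |A_ij| (x_i - s_ij x_j)`,
where `s_ij = ±1` is the sign of `A_ij`. Hence `xᵀ LB x ≥ 0`, and equality forces `x_i = 0` on
`V1` (where `B_i` is positive definite) and then, edge by edge, along every positive–negative path
(where `|A_ij|` is positive definite): `LB` is positive definite. Since `|A_ij| - A_ij` is
`2 |A_ij|` on `Ω_i` and `0` elsewhere, the `i`-th block of `LB (1 ⊗ θ)` is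
`(2 + δ) B_i θ = δ B_i x₀`, i.e. `1 ⊗ θ` is the equilibrium. The error `e = x - 1 ⊗ θ` solves
`e' = -LB e`, and by coercivity of `LB` the function `e^{2ct} |e(t)|²` is antitone.
-/

open Finset Function

lemma Matrix.PosSemidef.eq_zero_of_neg {n : Type*} [Fintype n] {Q : Matrix n n ℝ}
    (h₁ : Q.PosSemidef) (h₂ : (-Q).PosSemidef) : Q = 0 := by
  open scoped MatrixOrder in
  exact le_antisymm (by rwa [le_iff, zero_sub]) h₁.nonneg

lemma Matrix.IsSymm.dotProduct_mulVec_comm {n R : Type*} [Fintype n] [CommSemiring R]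
    {P : Matrix n n R} (hP : P.IsSymm) (u w : n → R) : u ⬝ᵥ P *ᵥ w = w ⬝ᵥ P *ᵥ u := by
  rw [dotProduct_mulVec, ← mulVec_transpose, hP.eq, dotProduct_comm]

section AbsM

variable {d : ℕ} {Q : Matrix (Fin d) (Fin d) ℝ}

lemma absM_posSemidef_s9 (h : Q.PosSemidef ∨ (-Q).PosSemidef) : (absM Q).PosSemidef := by
  unfold absM
  split_ifs with hQ
  · exact hQ
  · exact h.resolve_left hQ

lemma absM_posDef_s9 (h : Q.PosDef ∨ (-Q).PosDef) : (absM Q).PosDef := by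
  unfold absM
  split_ifs with hQ
  · refine h.elim id fun hneg => .of_dotProduct_mulVec_pos hQ.isHermitian fun x hx => ?_
    have hpos := hneg.dotProduct_mulVec_pos hx
    rw [neg_mulVec, dotProduct_neg] at hpos
    linarith [hQ.dotProduct_mulVec_nonneg x]
  · exact h.resolve_left fun hpos => hQ hpos.posSemidef

lemma absM_isSymm (h : Q.IsSymm) : (absM Q).IsSymm := by
  unfold absM
  split_ifs
  exacts [h, h.neg]

end AbsM

section LinearODE

open Real

variable {n : Type*} [Fintype n]

lemma Matrix.exists_pos_mul_dotProduct_self_le {M : Matrix n n ℝ}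
    (hM : ∀ v : n → ℝ, v ≠ 0 → 0 < v ⬝ᵥ M *ᵥ v) :
    ∃ c > 0, ∀ v : n → ℝ, c * (v ⬝ᵥ v) ≤ v ⬝ᵥ M *ᵥ v := by
  rcases isEmpty_or_nonempty n with hn | hn
  · exact ⟨1, one_pos, fun v => by simp [Subsingleton.elim v 0]⟩
  let q : EuclideanSpace ℝ n → ℝ := fun w => w.ofLp ⬝ᵥ M *ᵥ w.ofLp
  have hq : Continuous q := by
    simp only [q, dotProduct, mulVec]
    fun_prop
  obtain ⟨u, hu, hmin⟩ := (isCompact_sphere (0 : EuclideanSpace ℝ n) 1).exists_isMinOn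
    (NormedSpace.sphere_nonempty.mpr zero_le_one) hq.continuousOn
  have hu0 : u.ofLp ≠ 0 := by
    rintro h
    simp [show u = 0 from congrArg (WithLp.toLp 2) h] at hu
  refine ⟨q u, hM _ hu0, fun v => ?_⟩
  rcases eq_or_ne v 0 with rfl | hv
  · simp
  set w := WithLp.toLp 2 v
  have hw : 0 < ‖w‖ := norm_pos_iff.mpr (by simpa [w] using hv)
  have hvv : v ⬝ᵥ v = ‖w‖ ^ 2 := by
    rw [← real_inner_self_eq_norm_sq, EuclideanSpace.inner_toLp_toLp, star_trivial]
  have hscale : q (‖w‖⁻¹ • w) = ‖w‖⁻¹ ^ 2 * (v ⬝ᵥ M *ᵥ v) := by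
    simp only [q, WithLp.ofLp_smul, mulVec_smul, dotProduct_smul, smul_dotProduct, smul_eq_mul, w]
    ring
  have hle : q u ≤ q (‖w‖⁻¹ • w) := hmin (by simp [norm_smul, hw.ne'])
  rw [hscale] at hle
  rw [hvv]
  calc q u * ‖w‖ ^ 2 ≤ ‖w‖⁻¹ ^ 2 * (v ⬝ᵥ M *ᵥ v) * ‖w‖ ^ 2 := by gcongr
    _ = v ⬝ᵥ M *ᵥ v := by field_simp

lemma HasDerivAt.dotProduct_self {y : ℝ → n → ℝ} {y' : n → ℝ} {t : ℝ} (h : HasDerivAt y y' t) :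
    HasDerivAt (fun s => y s ⬝ᵥ y s) (2 * (y t ⬝ᵥ y')) t := by
  refine (HasDerivAt.fun_sum (u := univ) fun p _ =>
    (hasDerivAt_pi.1 h p).fun_mul (hasDerivAt_pi.1 h p)).congr_deriv ?_
  simp only [dotProduct, mul_sum]
  exact sum_congr rfl fun p _ => by ring

lemma dotProduct_self_le_exp_mul_of_hasDerivAt {M : Matrix n n ℝ} {c : ℝ}
    (hc : ∀ v : n → ℝ, c * (v ⬝ᵥ v) ≤ v ⬝ᵥ M *ᵥ v) {y : ℝ → n → ℝ}
    (hy : ∀ t, 0 ≤ t → HasDerivAt y (-(M *ᵥ y t)) t) {t : ℝ} (ht : 0 ≤ t) :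
    y t ⬝ᵥ y t ≤ exp (-(2 * c * t)) * (y 0 ⬝ᵥ y 0) := by
  set E : ℝ → ℝ := fun s => exp (2 * c * s) * (y s ⬝ᵥ y s)
  have hE : ∀ s, 0 ≤ s → HasDerivAt E
      (2 * exp (2 * c * s) * (c * (y s ⬝ᵥ y s) - y s ⬝ᵥ M *ᵥ y s)) s := fun s hs => by
    refine (((hasDerivAt_id s).const_mul (2 * c)).exp.mul (hy s hs).dotProduct_self).congr_deriv ?_
    simp only [id, dotProduct_neg]
    ring
  have hanti : AntitoneOn E (Set.Ici 0) :=
    antitoneOn_of_hasDerivWithinAt_nonpos (convex_Ici 0)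
      (fun s hs => (hE s hs).continuousAt.continuousWithinAt)
      (fun s hs => (hE s (interior_subset hs)).hasDerivWithinAt)
      (fun s hs => mul_nonpos_of_nonneg_of_nonpos (by positivity)
        (sub_nonpos.2 (hc (y s))))
  calc y t ⬝ᵥ y t = exp (-(2 * c * t)) * E t := by
        simp only [E, ← mul_assoc, ← exp_add, neg_add_cancel, exp_zero, one_mul]
    _ ≤ exp (-(2 * c * t)) * E 0 := by gcongr; exact hanti Set.self_mem_Ici ht ht
    _ = exp (-(2 * c * t)) * (y 0 ⬝ᵥ y 0) := by simp [E]

theorem tendsto_of_hasDerivAt_neg_mulVec_add {M : Matrix n n ℝ}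
    (hM : ∀ v : n → ℝ, v ≠ 0 → 0 < v ⬝ᵥ M *ᵥ v) {b xs : n → ℝ} (hxs : M *ᵥ xs = b)
    {x : ℝ → n → ℝ} (hx : ∀ t, 0 ≤ t → HasDerivAt x (-(M *ᵥ x t) + b) t) :
    Tendsto x atTop (nhds xs) := by
  obtain ⟨c, hc, hcM⟩ := M.exists_pos_mul_dotProduct_self_le hM
  set y : ℝ → n → ℝ := fun t => x t - xs
  have hy : ∀ t, 0 ≤ t → HasDerivAt y (-(M *ᵥ y t)) t := fun t ht =>
    ((hx t ht).sub_const xs).congr_deriv (by simp only [y, mulVec_sub, hxs]; abel)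
  have hbound : Tendsto (fun t => sqrt (exp (-(2 * c * t)) * (y 0 ⬝ᵥ y 0))) atTop (nhds 0) := by
    have hexp : Tendsto (fun t => exp (-(2 * c * t))) atTop (nhds 0) :=
      tendsto_exp_atBot.comp (tendsto_neg_atTop_atBot.comp
        (tendsto_id.const_mul_atTop (by positivity)))
    simpa using (hexp.mul_const (y 0 ⬝ᵥ y 0)).sqrt
  rw [← tendsto_sub_nhds_zero_iff]
  refine squeeze_zero_norm' ?_ hbound
  filter_upwards [eventually_ge_atTop 0] with t ht
  refine (pi_norm_le_iff_of_nonneg (sqrt_nonneg _)).2 fun p => ?_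
  rw [Real.norm_eq_abs]
  refine abs_le_sqrt (le_trans ?_ (dotProduct_self_le_exp_mul_of_hasDerivAt hcM hy ht))
  simpa only [dotProduct, sq] using
    single_le_sum (f := fun q => y t q * y t q) (fun q _ => mul_self_nonneg _) (mem_univ p)

end LinearODE

section Blocks

variable {N d : ℕ}

lemma dotProduct_eq_sum_curry {m n : Type*} [Fintype m] [Fintype n] (u w : m × n → ℝ) :
    u ⬝ᵥ w = ∑ i, curry u i ⬝ᵥ curry w i := by
  simp only [dotProduct, Fintype.sum_prod_type, curry_apply]

lemma curry_lap_mulVec (A : Fin N → Fin N → Matrix (Fin d) (Fin d) ℝ)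
    (v : Fin N × Fin d → ℝ) (i : Fin N) :
    curry (Lap A *ᵥ v) i = inDeg A i *ᵥ curry v i - ∑ j ∈ univ.erase i, A i j *ᵥ curry v j := by
  ext a
  simp only [curry_apply, mulVec, dotProduct, Pi.sub_apply, Finset.sum_apply,
    Fintype.sum_prod_type]
  rw [← add_sum_erase _ _ (mem_univ i), sub_eq_add_neg, ← sum_neg_distrib]
  congr 1
  · simp only [Lap, inDeg, if_true]
  · refine sum_congr rfl fun j hj => ?_
    simp only [Lap, if_neg (ne_of_mem_erase hj).symm, Matrix.neg_apply, neg_mul, sum_neg_distrib]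

lemma curry_blockDiag'_mulVec (D : Fin N → Matrix (Fin d) (Fin d) ℝ)
    (v : Fin N × Fin d → ℝ) (i : Fin N) :
    curry (_root_.blockDiag' D *ᵥ v) i = D i *ᵥ curry v i := by
  ext a
  simp only [curry_apply, mulVec, dotProduct, Fintype.sum_prod_type]
  rw [← add_sum_erase _ _ (mem_univ i), sum_eq_zero (s := univ.erase i) fun j hj => ?_, add_zero]
  · simp only [_root_.blockDiag', if_true]
  · simp [_root_.blockDiag', if_neg (ne_of_mem_erase hj).symm]

end Blocks

section SignedNetwork

variable {N d : ℕ} {A : Fin N → Fin N → Matrix (Fin d) (Fin d) ℝ}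

noncomputable def psdSign (Q : Matrix (Fin d) (Fin d) ℝ) : ℝ :=
  if Q.PosSemidef then 1 else -1

lemma psdSign_smul_absM (Q : Matrix (Fin d) (Fin d) ℝ) : psdSign Q • absM Q = Q := by
  unfold psdSign absM
  split_ifs <;> simp

lemma psdSign_mul_self (Q : Matrix (Fin d) (Fin d) ℝ) : psdSign Q * psdSign Q = 1 := by
  unfold psdSign
  split_ifs <;> norm_num

noncomputable def edgeEnergy (A : Fin N → Fin N → Matrix (Fin d) (Fin d) ℝ)
    (x : Fin N → Fin d → ℝ) (i j : Fin N) : ℝ :=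
  (x i - psdSign (A i j) • x j) ⬝ᵥ absM (A i j) *ᵥ (x i - psdSign (A i j) • x j)

lemma edgeEnergy_nonneg (hA : SignedWeights A) (x : Fin N → Fin d → ℝ) {i j : Fin N}
    (hij : i ≠ j) : 0 ≤ edgeEnergy A x i j :=
  (absM_posSemidef_s9 (hA i j hij).2).dotProduct_mulVec_nonneg _

lemma edgeEnergy_eq {i j : Fin N} (hsymm : (A i j).IsSymm) (hund : A j i = A i j)
    (x : Fin N → Fin d → ℝ) :
    edgeEnergy A x i j = (x i ⬝ᵥ absM (A i j) *ᵥ x i - x i ⬝ᵥ A i j *ᵥ x j)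
      + (x j ⬝ᵥ absM (A j i) *ᵥ x j - x j ⬝ᵥ A j i *ᵥ x i) := by
  have hA : ∀ u w : Fin d → ℝ, u ⬝ᵥ A i j *ᵥ w = psdSign (A i j) * (u ⬝ᵥ absM (A i j) *ᵥ w) :=
    fun u w => by
      conv_lhs => rw [← psdSign_smul_absM (A i j)]
      rw [smul_mulVec, dotProduct_smul, smul_eq_mul]
  rw [hund, hA, hA, edgeEnergy]
  simp only [mulVec_sub, mulVec_smul, sub_dotProduct, dotProduct_sub, smul_dotProduct,
    dotProduct_smul, smul_eq_mul, (absM_isSymm hsymm).dotProduct_mulVec_comm (x j) (x i)]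
  linear_combination (x j ⬝ᵥ absM (A i j) *ᵥ x j) * psdSign_mul_self (A i j)

lemma dotProduct_lap_mulVec (A : Fin N → Fin N → Matrix (Fin d) (Fin d) ℝ)
    (v : Fin N × Fin d → ℝ) :
    v ⬝ᵥ Lap A *ᵥ v = ∑ i, ∑ j ∈ univ.erase i,
      (curry v i ⬝ᵥ absM (A i j) *ᵥ curry v i - curry v i ⬝ᵥ A i j *ᵥ curry v j) := by
  rw [dotProduct_eq_sum_curry]
  refine sum_congr rfl fun i _ => ?_
  rw [curry_lap_mulVec, inDeg, sum_mulVec, dotProduct_sub, dotProduct_sum, dotProduct_sum,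
    sum_sub_distrib]

lemma two_mul_dotProduct_lap_mulVec (hsymm : ∀ i j, i ≠ j → (A i j).IsSymm)
    (hund : ∀ i j, i ≠ j → A i j = A j i) (v : Fin N × Fin d → ℝ) :
    2 * (v ⬝ᵥ Lap A *ᵥ v) = ∑ i, ∑ j ∈ univ.erase i, edgeEnergy A (curry v) i j := by
  set f : Fin N → Fin N → ℝ := fun i j =>
    curry v i ⬝ᵥ absM (A i j) *ᵥ curry v i - curry v i ⬝ᵥ A i j *ᵥ curry v j
  have hswap : ∑ i, ∑ j ∈ univ.erase i, f i j = ∑ i, ∑ j ∈ univ.erase i, f j i :=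
    sum_comm' fun i j => by simp only [mem_univ, mem_erase, true_and, and_true, ne_comm]
  rw [dotProduct_lap_mulVec, two_mul]
  nth_rewrite 2 [hswap]
  rw [← sum_add_distrib]
  refine sum_congr rfl fun i _ => ?_
  rw [← sum_add_distrib]
  refine sum_congr rfl fun j hj => ?_
  have hji := ne_of_mem_erase hj
  exact (edgeEnergy_eq (hsymm i j hji.symm) (hund i j hji.symm).symm _).symm

lemma eq_zero_of_edgeEnergy_eq_zero {x : Fin N → Fin d → ℝ} {i j : Fin N}
    (hdef : (A i j).PosDef ∨ (-(A i j)).PosDef) (hE : edgeEnergy A x i j = 0) (hj : x j = 0) :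
    x i = 0 := by
  by_contra hi
  have hpos := (absM_posDef_s9 hdef).dotProduct_mulVec_pos hi
  rw [edgeEnergy, hj, smul_zero, sub_zero] at hE
  exact hpos.ne' hE

lemma PNPath.eq_zero {x : Fin N → Fin d → ℝ}
    (hE : ∀ i j, i ≠ j → edgeEnergy A x i j = 0) {i j : Fin N} (hpath : PNPath A i j)
    (hi : x i = 0) : x j = 0 := by
  obtain ⟨m, -, p, rfl, rfl, hstep⟩ := hpath
  induction (Fin.last m) using Fin.induction with
  | zero => exact hi
  | succ s ih =>
    by_cases hs : p s.succ = p s.castSucc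
    · rwa [hs]
    · exact eq_zero_of_edgeEnergy_eq_zero (hstep s) (hE _ _ hs) ih

lemma Assumption2.eq_zero {V1 V2 : Finset (Fin N)} (hAss : Assumption2 A V1 V2)
    {x : Fin N → Fin d → ℝ} (hE : ∀ i j, i ≠ j → edgeEnergy A x i j = 0)
    (hV1 : ∀ i ∈ V1, x i = 0) : x = 0 := by
  obtain ⟨hcover, -, hreach⟩ := hAss
  funext j
  rcases mem_union.1 (hcover ▸ mem_univ j) with hj | hj
  · exact hV1 j hj
  · obtain ⟨i, hi, hpath⟩ := hreach j hj
    exact hpath.eq_zero hE (hV1 i hi)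

theorem dotProduct_lap_add_blockDiag'_mulVec_pos (hA : SignedWeights A)
    (hund : ∀ i j, i ≠ j → A i j = A j i) {V1 V2 : Finset (Fin N)}
    (hAss : Assumption2 A V1 V2) {B : Fin N → Matrix (Fin d) (Fin d) ℝ}
    (hB : ∀ i, (B i).PosSemidef) (hBV1 : ∀ i ∈ V1, (B i).PosDef) {δ : ℝ} (hδ : 0 < δ)
    {v : Fin N × Fin d → ℝ} (hv : v ≠ 0) :
    0 < v ⬝ᵥ (Lap A + _root_.blockDiag' fun i => δ • B i) *ᵥ v := by
  set x := curry v
  set energy := ∑ i, ∑ j ∈ univ.erase i, edgeEnergy A x i j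
  set damping := ∑ i, x i ⬝ᵥ B i *ᵥ x i
  have hquad : 2 * (v ⬝ᵥ (Lap A + _root_.blockDiag' fun i => δ • B i) *ᵥ v)
      = energy + 2 * δ * damping := by
    rw [add_mulVec, dotProduct_add, mul_add,
      two_mul_dotProduct_lap_mulVec (fun i j hij => (hA i j hij).1) hund,
      dotProduct_eq_sum_curry v (_root_.blockDiag' _ *ᵥ v)]
    simp only [curry_blockDiag'_mulVec, smul_mulVec, dotProduct_smul, smul_eq_mul, ← mul_sum]
    ring
  have henergy : ∀ i ∈ univ, 0 ≤ ∑ j ∈ univ.erase i, edgeEnergy A x i j := fun i _ =>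
    sum_nonneg fun j hj => edgeEnergy_nonneg hA x (ne_of_mem_erase hj).symm
  have hdamping : ∀ i ∈ univ, 0 ≤ x i ⬝ᵥ B i *ᵥ x i := fun i _ =>
    (hB i).dotProduct_mulVec_nonneg (x i)
  by_contra! hle
  have hsum : energy = 0 ∧ damping = 0 := by
    have := sum_nonneg henergy
    have := sum_nonneg hdamping
    constructor <;> nlinarith
  have hE : ∀ i j, i ≠ j → edgeEnergy A x i j = 0 := fun i j hij => by
    have hi := (sum_eq_zero_iff_of_nonneg henergy).1 hsum.1 i (mem_univ i)
    exact (sum_eq_zero_iff_of_nonneg fun j hj => edgeEnergy_nonneg hA x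
      (ne_of_mem_erase hj).symm).1 hi j (mem_erase.2 ⟨hij.symm, mem_univ j⟩)
  have hV1 : ∀ i ∈ V1, x i = 0 := fun i hi => by
    by_contra hxi
    exact ((hBV1 i hi).dotProduct_mulVec_pos hxi).ne'
      ((sum_eq_zero_iff_of_nonneg hdamping).1 hsum.2 i (mem_univ i))
  have hx : x = 0 := hAss.eq_zero hE hV1
  exact hv (funext fun p => congrFun (congrFun hx p.1) p.2)

lemma sum_absM_sub_eq_two_smul (hA : SignedWeights A) (i : Fin N) :
    ∑ j ∈ univ.erase i, (absM (A i j) - A i j) = (2 : ℝ) • ∑ j ∈ OmegaSet A i, absM (A i j) := by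
  have hsub : OmegaSet A i ⊆ univ.erase i := filter_subset _ _
  rw [← sum_subset hsub fun j hj hjΩ => ?_, smul_sum]
  · refine sum_congr rfl fun j hj => ?_
    obtain ⟨hneg, hne⟩ := (mem_filter.1 hj).2
    have hnpsd : ¬(A i j).PosSemidef := fun hpsd => hne (hpsd.eq_zero_of_neg hneg)
    rw [absM, if_neg hnpsd, two_smul]
    abel
  · by_cases hpsd : (A i j).PosSemidef
    · rw [absM, if_pos hpsd, sub_self]
    · have hzero : A i j = 0 := by
        by_contra hne
        have hneg := (hA i j (ne_of_mem_erase hj).symm).2.resolve_left hpsd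
        exact hjΩ (mem_filter.2 ⟨hj, hneg, hne⟩)
      rw [absM, if_neg hpsd, hzero, neg_zero, sub_zero]

lemma curry_lap_mulVec_const (hA : SignedWeights A) (θ : Fin d → ℝ) (i : Fin N) :
    curry (Lap A *ᵥ fun p => θ p.2) i = (2 : ℝ) • ((∑ j ∈ OmegaSet A i, absM (A i j)) *ᵥ θ) := by
  rw [curry_lap_mulVec, ← smul_mulVec, ← sum_absM_sub_eq_two_smul hA, sum_sub_distrib,
    sub_mulVec, inDeg]
  simp only [sum_mulVec]
  rfl

end SignedNetwork

theorem stmt9_general (N d : ℕ)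
    (A : Fin N → Fin N → Matrix (Fin d) (Fin d) ℝ) (hA : SignedWeights A)
    (hund : ∀ i j : Fin N, i ≠ j → A i j = A j i)
    (V1 V2 : Finset (Fin N)) (hAss : Assumption2 A V1 V2)
    (hPD : ∀ i ∈ V1, (∑ j ∈ OmegaSet A i, absM (A i j)).PosDef)
    (θ : Fin d → ℝ)
    (δ : ℝ) (hδ : 0 < δ)
    (δi : Fin N → ℝ) (hδi : ∀ i, δi i = if (OmegaSet A i).Nonempty then δ else 0)
    (B : Fin N → Matrix (Fin d) (Fin d) ℝ)
    (hB : ∀ i, B i = ∑ j ∈ OmegaSet A i, absM (A i j))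
    (x₀ : Fin d → ℝ) (hx₀ : x₀ = (1 + 2 / δ) • θ)
    (LB : Matrix (Fin N × Fin d) (Fin N × Fin d) ℝ)
    (hLB : LB = Lap A + blockDiag' fun i => δi i • B i)
    (b : Fin N × Fin d → ℝ) (hb : b = fun p => ((δi p.1 • B p.1).mulVec x₀) p.2) :
    ∀ x : ℝ → (Fin N × Fin d → ℝ),
      (∀ t : ℝ, 0 ≤ t → HasDerivAt x (-(LB.mulVec (x t)) + b) t) →
      Tendsto x atTop (nhds fun p => θ p.2) := by
  intro x hx
  have hδB : ∀ i, δi i • B i = δ • B i := fun i => by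
    rw [hδi]
    split_ifs with hΩ
    · rfl
    · rw [hB, not_nonempty_iff_eq_empty.1 hΩ, sum_empty, smul_zero, smul_zero]
  have hBpsd : ∀ i, (B i).PosSemidef := fun i => hB i ▸
    posSemidef_sum _ fun j hj => absM_posSemidef_s9 (.inr (mem_filter.1 hj).2.1)
  rw [hLB, funext hδB] at hx
  refine tendsto_of_hasDerivAt_neg_mulVec_add (fun v hv => ?_) ?_ hx
  · exact dotProduct_lap_add_blockDiag'_mulVec_pos hA hund hAss hBpsd
      (fun i hi => hB i ▸ hPD i hi) hδ hv
  · ext ⟨i, a⟩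
    have hlap : (Lap A *ᵥ fun p => θ p.2) (i, a) = ((2 : ℝ) • (B i *ᵥ θ)) a :=
      hB i ▸ congrFun (curry_lap_mulVec_const hA θ i) a
    have hdiag : ((blockDiag' fun i => δ • B i) *ᵥ fun p => θ p.2) (i, a) = ((δ • B i) *ᵥ θ) a :=
      congrFun (curry_blockDiag'_mulVec _ _ i) a
    rw [add_mulVec, Pi.add_apply, hlap, hdiag, hb]
    dsimp only
    rw [hδB, hx₀]
    simp only [Pi.smul_apply, smul_mulVec, mulVec_smul, smul_eq_mul]
    field_simp
    ring

/-- (Corollary 1: non-trivial consensus on undirected signed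
matrix-weighted networks), with arbitrary coupling strength `δ > 0`. -/
theorem stmt9 (N d : ℕ) (hN : 1 ≤ N) (hd : 1 ≤ d)
    (A : Fin N → Fin N → Matrix (Fin d) (Fin d) ℝ) (hA : SignedWeights A)
    (hund : ∀ i j : Fin N, i ≠ j → A i j = A j i)
    (V1 V2 : Finset (Fin N)) (hAss : Assumption2 A V1 V2)
    (hPD : ∀ i ∈ V1, (∑ j ∈ OmegaSet A i, absM (A i j)).PosDef)
    (θ : Fin d → ℝ) (hθ : θ ≠ 0)
    (δ : ℝ) (hδ : 0 < δ)
    (δi : Fin N → ℝ) (hδi : ∀ i, δi i = if (OmegaSet A i).Nonempty then δ else 0)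
    (B : Fin N → Matrix (Fin d) (Fin d) ℝ)
    (hB : ∀ i, B i = ∑ j ∈ OmegaSet A i, absM (A i j))
    (x₀ : Fin d → ℝ) (hx₀ : x₀ = (1 + 2 / δ) • θ)
    (LB : Matrix (Fin N × Fin d) (Fin N × Fin d) ℝ)
    (hLB : LB = Lap A + blockDiag' fun i => δi i • B i)
    (b : Fin N × Fin d → ℝ) (hb : b = fun p => ((δi p.1 • B p.1).mulVec x₀) p.2) :
    ∀ x : ℝ → (Fin N × Fin d → ℝ),
      (∀ t : ℝ, 0 ≤ t → HasDerivAt x (-(LB.mulVec (x t)) + b) t) →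
      Tendsto x atTop (nhds fun p => θ p.2) :=
  stmt9_general N d A hA hund V1 V2 hAss hPD θ δ hδ δi hδi B hB x₀ hx₀ LB hLB b hb
end
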